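/- arXiv:2309.12823 — 2 statements merged into one kernel-verified Lean document; each statement's English description precedes it below -/
import Mathlib

section
/- Let $g_1, \ldots, g_m$ be positive integers with $v = \sum_{i=1}^m g_i$, and let $n$ be the number of indices $i$ with $g_i$ odd. If $v$ is odd, then $\sum_{i=1}^m g_i(v-g_i) \equiv 0 \pmod 4$ if and only if $n \equiv 1 \pmod 4$. -/
theorem stmt_2 (m : ℕ) (g : Fin m → ℕ) (hg : ∀ i, 0 < g i)
    (v : ℕ) (hv : v = ∑ i, g i)
    (n : ℕ) (hn : n = (Finset.univ.filter (fun i => Odd (g i))).card)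
    (hvodd : Odd v) :
    (∑ i, g i * (v - g i)) % 4 = 0 ↔ n % 4 = 1 := by
  have hle : ∀ i, g i ≤ v := by
    intro i
    rw [hv]
    exact Finset.single_le_sum (fun j _ => Nat.zero_le _) (Finset.mem_univ i)
  have hsum : (∑ i, g i * (v - g i)) + ∑ i, g i ^ 2 = v * v := by
    rw [← Finset.sum_add_distrib]
    have : ∀ i ∈ Finset.univ, g i * (v - g i) + g i ^ 2 = g i * v := by
      intro i _
      have := hle i
      have : v - g i + g i = v := Nat.sub_add_cancel (hle i)
      nlinarith [Nat.sub_add_cancel (hle i)]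
    rw [Finset.sum_congr rfl this, ← Finset.sum_mul, ← hv]
  have hS : (∑ i, g i ^ 2) % 4 = n % 4 := by
    rw [Finset.sum_nat_mod]
    have h1 : ∀ i ∈ Finset.univ, g i ^ 2 % 4 = if Odd (g i) then 1 else 0 := by
      intro i _
      rcases Nat.even_or_odd (g i) with ⟨k, hk⟩ | ⟨k, hk⟩
      · rw [if_neg (by simp [Nat.not_odd_iff_even.mpr ⟨k, hk⟩]), hk]
        ring_nf
        omega
      · rw [if_pos ⟨k, hk⟩, hk]
        ring_nf
        omega
    rw [Finset.sum_congr rfl h1, ← Finset.card_filter, ← hn]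
  have hv2 : v * v % 4 = 1 := by
    obtain ⟨k, hk⟩ := hvodd
    subst hk
    ring_nf
    omega
  omega
end

section
/- If there exists a 4-GDD of type $28^m \ell^1$ with $m \geq 1$, a 4-GDD of type $4^a 7^b$ with $4a + 7b = \ell$, and 4-GDDs of types $4^7$ and $7^4$ exist, then for all non-negative integers $x \le m$ there exists a 4-GDD of type $4^{a + 7(m-x)} 7^{b + 4x}$. -/
/-- A `k`-GDD on point set `X` with groups `G` (a partition of `X`) and blocks `B`. -/
def IsGDD {α : Type} [DecidableEq α] (k : ℕ) (X : Finset α)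
    (G : Finset (Finset α)) (B : Finset (Finset α)) : Prop :=
  (∀ g ∈ G, g ⊆ X) ∧
  (∀ x ∈ X, ∃! g, g ∈ G ∧ x ∈ g) ∧
  (∀ b ∈ B, b ⊆ X ∧ b.card = k) ∧
  (∀ b ∈ B, ∀ g ∈ G, (b ∩ g).card ≤ 1) ∧
  (∀ x ∈ X, ∀ y ∈ X, x ≠ y → (∀ g ∈ G, ¬(x ∈ g ∧ y ∈ g)) →
    ∃! b, b ∈ B ∧ x ∈ b ∧ y ∈ b)

/-- There exists a `k`-GDD whose multiset of group sizes is `T`. -/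
def HasGDDofType (k : ℕ) (T : Multiset ℕ) : Prop :=
  ∃ (X : Finset ℕ) (G : Finset (Finset ℕ)) (B : Finset (Finset ℕ)),
    IsGDD k X G B ∧ G.val.map Finset.card = T

/-- If an injective-on-`X` map sends sets to equal images, the sets are equal. -/
lemma image_injOn_aux {f : ℕ → ℕ} {X : Finset ℕ} (hf : Set.InjOn f ↑X)
    {s t : Finset ℕ} (hs : s ⊆ X) (ht : t ⊆ X) (h : s.image f = t.image f) : s = t := by
  ext z
  constructor
  · intro hz
    have hfz : f z ∈ t.image f := h ▸ Finset.mem_image_of_mem f hz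
    obtain ⟨w, hw, hwz⟩ := Finset.mem_image.1 hfz
    rwa [← hf (ht hw) (hs hz) hwz]
  · intro hz
    have hfz : f z ∈ s.image f := h.symm ▸ Finset.mem_image_of_mem f hz
    obtain ⟨w, hw, hwz⟩ := Finset.mem_image.1 hfz
    rwa [← hf (hs hw) (ht hz) hwz]

/-- Two distinct groups of a GDD are disjoint. -/
lemma gdd_groups_disjoint {k : ℕ} {X : Finset ℕ} {G B : Finset (Finset ℕ)}
    (h : IsGDD k X G B) {g₁ g₂ : Finset ℕ}
    (h1 : g₁ ∈ G) (h2 : g₂ ∈ G) (hne : g₁ ≠ g₂) : Disjoint g₁ g₂ := by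
  obtain ⟨hG, hpart, -, -, -⟩ := h
  rw [Finset.disjoint_left]
  intro x hx1 hx2
  obtain ⟨g, -, huniq⟩ := hpart x (hG g₁ h1 hx1)
  exact hne ((huniq g₁ ⟨h1, hx1⟩).trans (huniq g₂ ⟨h2, hx2⟩).symm)

/-- The number of points of a GDD equals the sum of the group sizes. -/
lemma gdd_card {k : ℕ} {X : Finset ℕ} {G B : Finset (Finset ℕ)}
    (h : IsGDD k X G B) : X.card = (G.val.map Finset.card).sum := by
  have hG := h.1
  have hpart := h.2.1
  have hdisj : ∀ g₁ ∈ G, ∀ g₂ ∈ G, g₁ ≠ g₂ → Disjoint (id g₁) (id g₂) := by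
    intro g₁ h1 g₂ h2 hne
    exact gdd_groups_disjoint h h1 h2 hne
  have hX : X = G.biUnion id := by
    apply Finset.Subset.antisymm
    · intro x hx
      obtain ⟨g, ⟨hg, hxg⟩, -⟩ := hpart x hx
      exact Finset.mem_biUnion.2 ⟨g, hg, hxg⟩
    · intro x hx
      obtain ⟨g, hg, hxg⟩ := Finset.mem_biUnion.1 hx
      exact hG g hg hxg
  rw [hX, Finset.card_biUnion hdisj]
  rfl

/-- Relabelling a GDD along a map injective on its point set. -/
lemma gdd_relabel {k : ℕ} {X : Finset ℕ} {G B : Finset (Finset ℕ)}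
    (h : IsGDD k X G B) (f : ℕ → ℕ) (hf : Set.InjOn f ↑X) :
    IsGDD k (X.image f) (G.image (Finset.image f)) (B.image (Finset.image f)) := by
  obtain ⟨hG, hpart, hB, hint, hpair⟩ := h
  have memA : ∀ s : Finset ℕ, s ⊆ X → ∀ x ∈ X, f x ∈ s.image f → x ∈ s := by
    intro s hs x hx hfx
    obtain ⟨z, hz, hzx⟩ := Finset.mem_image.1 hfx
    rwa [← hf (hs hz) hx hzx]
  have cardA : ∀ s : Finset ℕ, s ⊆ X → (s.image f).card = s.card := fun s hs =>
    Finset.card_image_of_injOn (hf.mono (Finset.coe_subset.2 hs))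
  have interA : ∀ s t : Finset ℕ, s ⊆ X → t ⊆ X →
      s.image f ∩ t.image f = (s ∩ t).image f := by
    intro s t hs ht
    apply Finset.Subset.antisymm
    · intro y hy
      obtain ⟨hys, hyt⟩ := Finset.mem_inter.1 hy
      obtain ⟨z, hz, rfl⟩ := Finset.mem_image.1 hys
      have : z ∈ t := memA t ht z (hs hz) hyt
      exact Finset.mem_image_of_mem _ (Finset.mem_inter.2 ⟨hz, this⟩)
    · intro y hy
      obtain ⟨z, hz, rfl⟩ := Finset.mem_image.1 hy
      exact Finset.mem_inter.2 ⟨Finset.mem_image_of_mem _ (Finset.mem_inter.1 hz).1,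
        Finset.mem_image_of_mem _ (Finset.mem_inter.1 hz).2⟩
  refine ⟨?_, ?_, ?_, ?_, ?_⟩
  · intro g' hg'
    obtain ⟨g, hg, rfl⟩ := Finset.mem_image.1 hg'
    exact Finset.image_subset_image (hG g hg)
  · intro x' hx'
    obtain ⟨x, hx, rfl⟩ := Finset.mem_image.1 hx'
    obtain ⟨g, ⟨hgG, hxg⟩, huniq⟩ := hpart x hx
    refine ⟨g.image f, ⟨Finset.mem_image_of_mem _ hgG, Finset.mem_image_of_mem _ hxg⟩, ?_⟩
    rintro g' ⟨hg', hxg'⟩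
    obtain ⟨hh, hhG, rfl⟩ := Finset.mem_image.1 hg'
    have : x ∈ hh := memA hh (hG hh hhG) x hx hxg'
    rw [huniq hh ⟨hhG, this⟩]
  · intro b' hb'
    obtain ⟨bb, hbb, rfl⟩ := Finset.mem_image.1 hb'
    exact ⟨Finset.image_subset_image (hB bb hbb).1,
      (cardA bb (hB bb hbb).1).trans (hB bb hbb).2⟩
  · intro b' hb' g' hg'
    obtain ⟨bb, hbb, rfl⟩ := Finset.mem_image.1 hb'
    obtain ⟨g, hg, rfl⟩ := Finset.mem_image.1 hg'
    rw [interA bb g (hB bb hbb).1 (hG g hg),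
      cardA _ ((Finset.inter_subset_left).trans (hB bb hbb).1)]
    exact hint bb hbb g hg
  · intro x' hx' y' hy' hne hgrp
    obtain ⟨x, hx, rfl⟩ := Finset.mem_image.1 hx'
    obtain ⟨y, hy, rfl⟩ := Finset.mem_image.1 hy'
    have hxy : x ≠ y := fun hc => hne (by rw [hc])
    have hgrp' : ∀ g ∈ G, ¬(x ∈ g ∧ y ∈ g) := by
      rintro g hg ⟨h1, h2⟩
      exact hgrp (g.image f) (Finset.mem_image_of_mem _ hg)
        ⟨Finset.mem_image_of_mem _ h1, Finset.mem_image_of_mem _ h2⟩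
    obtain ⟨bb, ⟨hbB, hxb, hyb⟩, huniq⟩ := hpair x hx y hy hxy hgrp'
    refine ⟨bb.image f, ⟨Finset.mem_image_of_mem _ hbB, Finset.mem_image_of_mem _ hxb,
      Finset.mem_image_of_mem _ hyb⟩, ?_⟩
    rintro b' ⟨hb', hxb', hyb'⟩
    obtain ⟨c, hc, rfl⟩ := Finset.mem_image.1 hb'
    have hcX := (hB c hc).1
    rw [huniq c ⟨hc, memA c hcX x hx hxb', memA c hcX y hy hyb'⟩]

/-- Filling one group of a GDD with a small GDD of the appropriate type. -/
lemma fill_one {k : ℕ} {T S : Multiset ℕ} {n : ℕ} (hS : S.sum = n) (h0 : (0:ℕ) ∉ S)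
    (h1 : HasGDDofType k (T + {n})) (h2 : HasGDDofType k S) :
    HasGDDofType k (T + S) := by
  obtain ⟨X, G, B, hGDD, htype⟩ := h1
  obtain ⟨hG, hpart, hB, hint, hpair⟩ := id hGDD
  rw [add_comm, Multiset.singleton_add] at htype
  obtain ⟨g, hgv, hgcard, herase⟩ := (Multiset.map_eq_cons _ _ _ _).2 htype
  have hgG : g ∈ G := hgv
  obtain ⟨X₀, G₀, B₀, h₀GDD, htype₀⟩ := h2
  have hX₀card : X₀.card = g.card := by
    rw [gdd_card h₀GDD, htype₀, hS, hgcard]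
  set e := Finset.equivOfCardEq hX₀card with he
  set f : ℕ → ℕ := fun x => if hx : x ∈ X₀ then (e ⟨x, hx⟩ : ℕ) else 0 with hfdef
  have hfval : ∀ x (hx : x ∈ X₀), f x = (e ⟨x, hx⟩ : ℕ) := fun x hx => dif_pos hx
  have hfinj : Set.InjOn f ↑X₀ := by
    intro x hx y hy hxy
    rw [hfval x hx, hfval y hy] at hxy
    have h2 := e.injective (Subtype.coe_injective hxy)
    exact congrArg Subtype.val h2
  have himg : X₀.image f = g := by
    apply Finset.Subset.antisymm
    · intro y hy
      obtain ⟨x, hx, rfl⟩ := Finset.mem_image.1 hy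
      rw [hfval x hx]
      exact (e ⟨x, hx⟩).2
    · intro y hy
      refine Finset.mem_image.2 ⟨(e.symm ⟨y, hy⟩ : ℕ), (e.symm ⟨y, hy⟩).2, ?_⟩
      rw [hfval _ (e.symm ⟨y, hy⟩).2]
      have hh : (⟨(e.symm ⟨y, hy⟩ : ℕ), (e.symm ⟨y, hy⟩).2⟩ : {x // x ∈ X₀})
          = e.symm ⟨y, hy⟩ := rfl
      rw [hh, e.apply_symm_apply]
  set Gg : Finset (Finset ℕ) := G₀.image (Finset.image f) with hGgdef
  set Bg : Finset (Finset ℕ) := B₀.image (Finset.image f) with hBgdef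
  have hfill : IsGDD k g Gg Bg := by
    have hrel := gdd_relabel h₀GDD f hfinj
    rwa [himg] at hrel
  obtain ⟨hGf, hpartf, hBf, hintf, hpairf⟩ := id hfill
  have hGgtype : Gg.val.map Finset.card = S := by
    have hFinj : Set.InjOn (Finset.image f) ↑G₀ := fun s hs t ht hst =>
      image_injOn_aux hfinj (h₀GDD.1 s hs) (h₀GDD.1 t ht) hst
    have hval : Gg.val = G₀.val.map (Finset.image f) := Finset.image_val_of_injOn hFinj
    rw [hval, Multiset.map_map, ← htype₀]
    apply Multiset.map_congr rfl
    intro s hs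
    exact Finset.card_image_of_injOn (hfinj.mono (Finset.coe_subset.2 (h₀GDD.1 s hs)))
  have hGg_sub : ∀ h ∈ Gg, h ⊆ g := hfill.1
  have hdisjG : Disjoint (G.erase g) Gg := by
    rw [Finset.disjoint_left]
    intro h hh1 hh2
    have hhG : h ∈ G := Finset.mem_of_mem_erase hh1
    have hhne : h ≠ g := Finset.ne_of_mem_erase hh1
    have hsub : h ⊆ g := hGg_sub h hh2
    have hcard : h.card ∈ S := by
      rw [← hGgtype]
      exact Multiset.mem_map_of_mem _ hh2
    have hne0 : h.card ≠ 0 := fun hc => h0 (hc ▸ hcard)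
    obtain ⟨x, hx⟩ := Finset.card_pos.1 (Nat.pos_of_ne_zero hne0)
    obtain ⟨g', -, huniq⟩ := hpart x (hG g hgG (hsub hx))
    exact hhne ((huniq h ⟨hhG, hx⟩).trans (huniq g ⟨hgG, hsub hx⟩).symm)
  refine ⟨X, (G.erase g).disjUnion Gg hdisjG, B ∪ Bg, ⟨?_, ?_, ?_, ?_, ?_⟩, ?_⟩
  · intro h hh
    rcases Finset.mem_disjUnion.1 hh with hh | hh
    · exact hG h (Finset.mem_of_mem_erase hh)
    · exact (hGg_sub h hh).trans (hG g hgG)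
  · intro x hx
    by_cases hxg : x ∈ g
    · obtain ⟨h, ⟨hhGg, hxh⟩, huniq⟩ := hpartf x hxg
      refine ⟨h, ⟨Finset.mem_disjUnion.2 (Or.inr hhGg), hxh⟩, ?_⟩
      rintro h' ⟨hh', hxh'⟩
      rcases Finset.mem_disjUnion.1 hh' with hh' | hh'
      · exfalso
        obtain ⟨g'', -, huniq2⟩ := hpart x hx
        exact (Finset.ne_of_mem_erase hh')
          ((huniq2 h' ⟨Finset.mem_of_mem_erase hh', hxh'⟩).trans (huniq2 g ⟨hgG, hxg⟩).symm)
      · exact huniq h' ⟨hh', hxh'⟩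
    · obtain ⟨h, ⟨hhG, hxh⟩, huniq⟩ := hpart x hx
      have hhne : h ≠ g := fun hc => hxg (hc ▸ hxh)
      refine ⟨h, ⟨Finset.mem_disjUnion.2 (Or.inl (Finset.mem_erase.2 ⟨hhne, hhG⟩)), hxh⟩, ?_⟩
      rintro h' ⟨hh', hxh'⟩
      rcases Finset.mem_disjUnion.1 hh' with hh' | hh'
      · exact huniq h' ⟨Finset.mem_of_mem_erase hh', hxh'⟩
      · exact absurd (hGg_sub h' hh' hxh') hxg
  · intro bb hbb
    rcases Finset.mem_union.1 hbb with hbb | hbb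
    · exact hB bb hbb
    · obtain ⟨hs, hc⟩ := hBf bb hbb
      exact ⟨hs.trans (hG g hgG), hc⟩
  · intro bb hbb h hh
    rcases Finset.mem_union.1 hbb with hbb | hbb
    · rcases Finset.mem_disjUnion.1 hh with hh | hh
      · exact hint bb hbb h (Finset.mem_of_mem_erase hh)
      · calc (bb ∩ h).card ≤ (bb ∩ g).card :=
              Finset.card_le_card (Finset.inter_subset_inter (Finset.Subset.refl _) (hGg_sub h hh))
          _ ≤ 1 := hint bb hbb g hgG
    · rcases Finset.mem_disjUnion.1 hh with hh | hh
      · have hbg : bb ⊆ g := (hBf bb hbb).1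
        have hdis : Disjoint g h := gdd_groups_disjoint hGDD hgG
          (Finset.mem_of_mem_erase hh) (Ne.symm (Finset.ne_of_mem_erase hh))
        have hie : bb ∩ h = ∅ := by
          rw [← Finset.disjoint_iff_inter_eq_empty]
          exact Finset.disjoint_of_subset_left hbg hdis
        simp [hie]
      · exact hintf bb hbb h hh
  · intro x hx y hy hxy hgrp
    by_cases hcase : x ∈ g ∧ y ∈ g
    · obtain ⟨hxg, hyg⟩ := hcase
      have hgrpf : ∀ h ∈ Gg, ¬(x ∈ h ∧ y ∈ h) := fun h hh =>
        hgrp h (Finset.mem_disjUnion.2 (Or.inr hh))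
      obtain ⟨bb, ⟨hbb, hxb, hyb⟩, huniq⟩ := hpairf x hxg y hyg hxy hgrpf
      refine ⟨bb, ⟨Finset.mem_union_right _ hbb, hxb, hyb⟩, ?_⟩
      rintro b' ⟨hb', hxb', hyb'⟩
      rcases Finset.mem_union.1 hb' with hb' | hb'
      · exfalso
        have hle : (b' ∩ g).card ≤ 1 := hint b' hb' g hgG
        exact hxy (Finset.card_le_one.1 hle x (Finset.mem_inter.2 ⟨hxb', hxg⟩)
          y (Finset.mem_inter.2 ⟨hyb', hyg⟩))
      · exact huniq b' ⟨hb', hxb', hyb'⟩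
    · have hgrpm : ∀ h ∈ G, ¬(x ∈ h ∧ y ∈ h) := by
        rintro h hh ⟨hxh, hyh⟩
        by_cases hhg : h = g
        · exact hcase ⟨hhg ▸ hxh, hhg ▸ hyh⟩
        · exact hgrp h (Finset.mem_disjUnion.2 (Or.inl (Finset.mem_erase.2 ⟨hhg, hh⟩)))
            ⟨hxh, hyh⟩
      obtain ⟨bb, ⟨hbb, hxb, hyb⟩, huniq⟩ := hpair x hx y hy hxy hgrpm
      refine ⟨bb, ⟨Finset.mem_union_left _ hbb, hxb, hyb⟩, ?_⟩
      rintro b' ⟨hb', hxb', hyb'⟩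
      rcases Finset.mem_union.1 hb' with hb' | hb'
      · exact huniq b' ⟨hb', hxb', hyb'⟩
      · exact absurd ⟨(hBf b' hb').1 hxb', (hBf b' hb').1 hyb'⟩ hcase
  · show ((G.erase g).disjUnion Gg hdisjG).val.map Finset.card = T + S
    have : ((G.erase g).disjUnion Gg hdisjG).val = (G.erase g).val + Gg.val := rfl
    rw [this, Multiset.map_add, hGgtype]
    congr 1

/-- Iteratively fill groups of size 28 with `4^7` or `7^4` GDDs. -/
lemma fill_28s (h47 : HasGDDofType 4 (Multiset.replicate 7 4))
    (h74 : HasGDDofType 4 (Multiset.replicate 4 7)) :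
    ∀ j : ℕ, ∀ R : Multiset ℕ, HasGDDofType 4 (Multiset.replicate j 28 + R) →
      ∀ x ≤ j, HasGDDofType 4
        (R + Multiset.replicate (7*(j-x)) 4 + Multiset.replicate (4*x) 7) := by
  intro j
  induction j with
  | zero =>
    intro R h x hx
    interval_cases x
    simpa using h
  | succ j ih =>
    intro R h x hx
    have hre : Multiset.replicate (j+1) 28 + R = (Multiset.replicate j 28 + R) + {28} := by
      rw [Multiset.replicate_succ, ← Multiset.singleton_add]
      abel
    rcases Nat.lt_or_ge x (j+1) with hlt | hge
    · have h' := fill_one (S := Multiset.replicate 7 4) (n := 28) (by simp)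
        (by simp [Multiset.mem_replicate]) (hre ▸ h) h47
      have h'' : HasGDDofType 4 (Multiset.replicate j 28 + (R + Multiset.replicate 7 4)) := by
        rwa [← add_assoc]
      have hres := ih (R + Multiset.replicate 7 4) h'' x (Nat.lt_succ_iff.1 hlt)
      have heq : R + Multiset.replicate 7 4 + Multiset.replicate (7*(j-x)) 4
          + Multiset.replicate (4*x) 7
          = R + Multiset.replicate (7*(j+1-x)) 4 + Multiset.replicate (4*x) 7 := by
        rw [show 7*(j+1-x) = 7 + 7*(j-x) by omega, Multiset.replicate_add]
        abel
      rwa [heq] at hres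
    · have hx1 : x = j + 1 := le_antisymm hx hge
      subst hx1
      have h' := fill_one (S := Multiset.replicate 4 7) (n := 28) (by simp)
        (by simp [Multiset.mem_replicate]) (hre ▸ h) h74
      have h'' : HasGDDofType 4 (Multiset.replicate j 28 + (R + Multiset.replicate 4 7)) := by
        rwa [← add_assoc]
      have hres := ih (R + Multiset.replicate 4 7) h'' j le_rfl
      have heq : R + Multiset.replicate 4 7 + Multiset.replicate (7*(j-j)) 4
          + Multiset.replicate (4*j) 7
          = R + Multiset.replicate (7*(j+1-(j+1))) 4 + Multiset.replicate (4*(j+1)) 7 := by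
        rw [show 7*(j-j) = 0 by omega, show 7*(j+1-(j+1)) = 0 by omega,
          show 4*(j+1) = 4*j + 4 by ring, Multiset.replicate_add]
        simp only [Multiset.replicate_zero, add_zero]
        abel
      rwa [heq] at hres

theorem stmt_16 (m ℓ a b : ℕ) (hm : 1 ≤ m) (hℓ : 4 * a + 7 * b = ℓ)
    (hmaster : HasGDDofType 4 (Multiset.replicate m 28 + {ℓ}))
    (hfillℓ : HasGDDofType 4 (Multiset.replicate a 4 + Multiset.replicate b 7))
    (h47 : HasGDDofType 4 (Multiset.replicate 7 4))
    (h74 : HasGDDofType 4 (Multiset.replicate 4 7)) :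
    ∀ x ≤ m, HasGDDofType 4
      (Multiset.replicate (a + 7 * (m - x)) 4 + Multiset.replicate (b + 4 * x) 7) := by
  intro x hx
  have hS : (Multiset.replicate a 4 + Multiset.replicate b 7).sum = ℓ := by
    simp only [Multiset.sum_add, Multiset.sum_replicate, smul_eq_mul]
    omega
  have h0 : (0:ℕ) ∉ Multiset.replicate a 4 + Multiset.replicate b 7 := by
    simp [Multiset.mem_replicate]
  have hstart := fill_one hS h0 hmaster hfillℓ
  have hres := fill_28s h47 h74 m _ hstart x hx
  have heq : Multiset.replicate a 4 + Multiset.replicate b 7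
      + Multiset.replicate (7*(m-x)) 4 + Multiset.replicate (4*x) 7
      = Multiset.replicate (a + 7*(m-x)) 4 + Multiset.replicate (b + 4*x) 7 := by
    rw [Multiset.replicate_add, Multiset.replicate_add]
    abel
  rwa [heq] at hres
end
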